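/- Let (X,r) be a finite quantum binomial set with |X| = n. Then the total number of D-orbits in X³ is at most C(n+2,3) = n(n+1)(n+2)/6, and equality holds if and only if (X,r) is a symmetric set, i.e. r satisfies the braid relation r¹² ∘ r²³ ∘ r¹² = r²³ ∘ r¹² ∘ r²³ on X³. (The number of D-orbits in X³ equals the dimension of the degree-3 component of the monoid algebra of the monoid S(X,r) associated with (X,r).) -/

import Mathlib

/-!
Write `f = r¹²` and `g = r²³`, two involutions of `X³`, and weigh each point `p` by
`2 + 3 [f p = p] + 3 [g p = p] + 4 [f p = p = g p]`. As `Fix f = Δ₂ × X`,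
`Fix g = X × Δ₂` and `Fix f ∩ Fix g = Δ₃`, the total weight is
`2n³ + 6n² + 4n = 12 · C(n+2, 3)`.

A D-orbit is a single point, a path with a fixed point at each end, or a cycle without fixed
points. Square-freeness and nondegeneracy rule out paths and cycles with two elements and cycles
with four, so a path has at least three points and a cycle at least six, and counting fixed
points modulo 2 shows that every orbit weighs at least 12. Equality holds exactly for the point,
the three-point path and the hexagon, i.e. on the orbits where the braid relation
`fgf = gfg` holds.
-/

/-- The map r¹² = r × id acting on X³ (realized as `X × X × X`). -/
def r12 {X : Type*} (r : X × X → X × X) : X × X × X → X × X × X :=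
  fun p => ((r (p.1, p.2.1)).1, (r (p.1, p.2.1)).2, p.2.2)

/-- The map r²³ = id × r acting on X³. -/
def r23 {X : Type*} (r : X × X → X × X) : X × X × X → X × X × X :=
  fun p => (p.1, (r (p.2.1, p.2.2)).1, (r (p.2.1, p.2.2)).2)

/-- One step of the action of the group D(r) generated by r¹² and r²³. -/
def dStep {X : Type*} (r : X × X → X × X) (a b : X × X × X) : Prop :=
  r12 r a = b ∨ r23 r a = b

/-- `O` is an orbit of the group D(r) = ⟨r¹², r²³⟩ acting on X³. -/
def IsDOrbit {X : Type*} (r : X × X → X × X) (O : Set (X × X × X)) : Prop :=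
  ∃ a, O = {b | Relation.EqvGen (dStep r) a b}

/-- `(X,r)` is a quantum binomial set: `r` is involutive, nondegenerate
(left and right actions are bijective) and square-free. -/
def IsQuantumBinomial {X : Type*} (r : X × X → X × X) : Prop :=
  Function.Involutive r ∧
  (∀ x : X, Function.Bijective (fun y => (r (x, y)).1)) ∧
  (∀ x : X, Function.Bijective (fun y => (r (y, x)).2)) ∧
  (∀ x : X, r (x, x) = (x, x))

/-- The subset Δ₂ × X of X³. -/
def Diag2X {X : Type*} : Set (X × X × X) := {p | p.1 = p.2.1}

/-- The subset X × Δ₂ of X³. -/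
def XDiag2 {X : Type*} : Set (X × X × X) := {p | p.2.1 = p.2.2}

/-- The diagonal Δ₃ of X³. -/
def Diag3 {X : Type*} : Set (X × X × X) := {p | p.1 = p.2.1 ∧ p.2.1 = p.2.2}

/-- `(X,r)` is braided: the braid relation r¹²r²³r¹² = r²³r¹²r²³ holds on X³. -/
def IsBraided {X : Type*} (r : X × X → X × X) : Prop :=
  (r12 r) ∘ (r23 r) ∘ (r12 r) = (r23 r) ∘ (r12 r) ∘ (r23 r)

open Finset Function

section DOrbits

variable {Y : Type*} {f g : Y → Y}

def dRel (f g : Y → Y) : Y → Y → Prop :=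
  Relation.EqvGen fun x y => f x = y ∨ g x = y

theorem dRel.preserves (hf : Involutive f) (hg : Involutive g) {P : Y → Prop}
    (hPf : ∀ y, P y → P (f y)) (hPg : ∀ y, P y → P (g y)) {a b : Y} (hab : dRel f g a b)
    (ha : P a) : P b := by
  suffices P a ↔ P b from this.1 ha
  clear ha
  induction hab with
  | rel x y hxy =>
    rcases hxy with rfl | rfl
    · exact ⟨hPf x, fun h => hf x ▸ hPf _ h⟩
    · exact ⟨hPg x, fun h => hg x ▸ hPg _ h⟩
  | refl => rfl
  | symm _ _ _ ih => exact ih.symm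
  | trans _ _ _ _ _ ih₁ ih₂ => exact ih₁.trans ih₂

theorem dRel_comm {a b : Y} : dRel f g a b ↔ dRel g f a b :=
  ⟨Relation.EqvGen.mono (fun _ _ => Or.symm) _ _, Relation.EqvGen.mono (fun _ _ => Or.symm) _ _⟩

/-- Rules out the D-orbits with two elements, and the D-orbits with four elements on which
neither involution has a fixed point. -/
structure HasNoShortDOrbits (f g : Y → Y) : Prop where
  fixed_of_apply_eq_apply : ∀ p, f p = g p → f p = p
  fixed_of_fgf_eq : ∀ p, f (g (f p)) = g p → f p = p
  right_fixed_of_left_fixed : ∀ p, f p = p → f (g p) = g p → g p = p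
  left_fixed_of_right_fixed : ∀ p, g p = p → g (f p) = f p → f p = p

section

variable [DecidableEq Y]

theorem card_filter_apply_eq_self_modEq (hf : Involutive f) {s : Finset Y}
    (hs : ∀ y ∈ s, f y ∈ s) : #{y ∈ s | f y = y} ≡ #s [MOD 2] := by
  let σ : Equiv.Perm s := (hf.toPerm f).subtypePerm fun y => ⟨fun h => hf y ▸ hs _ h, hs y⟩
  have hσ_apply (y : s) : σ y = y ↔ f y = y := Subtype.ext_iff
  have hσ : σ ^ 2 ^ 1 = 1 := by
    ext y
    simp [σ, sq, hf _]
  have hfix : #σ.supportᶜ = #{y ∈ s | f y = y} := by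
    refine card_bij (fun y _ => y.1) (fun y hy => ?_) (fun _ _ _ _ => Subtype.ext) fun y hy => ?_
    · simpa [Equiv.Perm.mem_support, hσ_apply] using hy
    · rw [mem_filter] at hy
      exact ⟨⟨y, hy.1⟩, by simpa [Equiv.Perm.mem_support, hσ_apply] using hy.2, rfl⟩
  simpa [hfix] using Equiv.Perm.card_compl_support_modEq (p := 2) hσ

/-- Where `⟨f, g⟩` acts on an orbit through `S₃ = ⟨f, g | f², g², (fg)³⟩` and
`Fix (fg) = Fix f ∩ Fix g`, Burnside's lemma for `S₃` makes the weights on that orbit add up to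
`2 · |S₃| = 12`: this is where the coefficients come from. -/
def dWeight (f g : Y → Y) (y : Y) : ℕ :=
  2 + (if f y = y then 3 else 0) + (if g y = y then 3 else 0) +
    if f y = y ∧ g y = y then 4 else 0

theorem dWeight_comm : dWeight f g = dWeight g f := by
  ext y
  simp only [dWeight, and_comm]
  omega

theorem sum_dWeight (s : Finset Y) :
    ∑ y ∈ s, dWeight f g y = 2 * #s + 3 * #{y ∈ s | f y = y} + 3 * #{y ∈ s | g y = y} +
      4 * #{y ∈ s | f y = y ∧ g y = y} := by
  simp only [dWeight, sum_add_distrib, sum_ite, sum_const_zero, sum_const, smul_eq_mul]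
  ring

theorem card_triple_eq_three_of_left_fixed (hf : Involutive f)
    (hfg : ∀ p, f p = p → f (g p) = g p → g p = p) {a : Y} (hfa : f a = a) (hga : g a ≠ a) :
    #{a, g a, f (g a)} = 3 := by
  have hfga : f (g a) ≠ g a := fun h => hga (hfg a hfa h)
  have hfga' : f (g a) ≠ a := fun h => hga (by rw [← hf (g a), h, hfa])
  rw [card_insert_of_notMem, card_pair hfga.symm]
  grind

end

variable [Fintype Y]

open scoped Classical in
noncomputable def dOrbit (f g : Y → Y) (a : Y) : Finset Y := {b | dRel f g a b}

theorem mem_dOrbit {a b : Y} : b ∈ dOrbit f g a ↔ dRel f g a b := by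
  simp [dOrbit]

theorem coe_dOrbit (a : Y) : (dOrbit f g a : Set Y) = {b | dRel f g a b} :=
  Set.ext fun _ => mem_dOrbit

theorem mem_dOrbit_self (a : Y) : a ∈ dOrbit f g a :=
  mem_dOrbit.2 (Relation.EqvGen.refl a)

theorem apply_left_mem_dOrbit {a b : Y} (hb : b ∈ dOrbit f g a) : f b ∈ dOrbit f g a :=
  mem_dOrbit.2 <| (mem_dOrbit.1 hb).trans _ _ _ (.rel _ _ (.inl rfl))

theorem apply_right_mem_dOrbit {a b : Y} (hb : b ∈ dOrbit f g a) : g b ∈ dOrbit f g a :=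
  mem_dOrbit.2 <| (mem_dOrbit.1 hb).trans _ _ _ (.rel _ _ (.inr rfl))

theorem dOrbit_comm : dOrbit f g = dOrbit g f := by
  ext a b
  simp only [mem_dOrbit, dRel_comm]

theorem dOrbit_eq_iff_mem {a b : Y} : dOrbit f g b = dOrbit f g a ↔ b ∈ dOrbit f g a := by
  refine ⟨fun h => h ▸ mem_dOrbit_self b, fun hb => ?_⟩
  have hab := mem_dOrbit.1 hb
  ext c
  simp only [mem_dOrbit]
  exact ⟨hab.trans _ _ _, (hab.symm _ _).trans _ _ _⟩

theorem dOrbit_subset (hf : Involutive f) (hg : Involutive g) {S : Finset Y}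
    (hSf : ∀ y ∈ S, f y ∈ S) (hSg : ∀ y ∈ S, g y ∈ S) {a : Y} (ha : a ∈ S) :
    dOrbit f g a ⊆ S :=
  fun _ hb => (mem_dOrbit.1 hb).preserves hf hg (P := (· ∈ S)) hSf hSg ha

theorem dOrbit_eq_singleton (hf : Involutive f) (hg : Involutive g) {a : Y} (hfa : f a = a)
    (hga : g a = a) : dOrbit f g a = {a} :=
  (dOrbit_subset hf hg (by simp [hfa]) (by simp [hga]) (mem_singleton_self a)).antisymm
    (singleton_subset_iff.2 (mem_dOrbit_self a))

theorem eq_of_mem_dOrbit_of_fixed (hf : Involutive f) (hg : Involutive g) {a b : Y}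
    (hb : b ∈ dOrbit f g a) (hfb : f b = b) (hgb : g b = b) : a = b := by
  have ha := mem_dOrbit_self (f := f) (g := g) a
  rwa [← dOrbit_eq_iff_mem.2 hb, dOrbit_eq_singleton hf hg hfb hgb, mem_singleton] at ha

theorem braid_of_mem_dOrbit (hf : Involutive f) (hg : Involutive g) {a b : Y}
    (ha : f (g (f a)) = g (f (g a))) (hb : b ∈ dOrbit f g a) : f (g (f b)) = g (f (g b)) := by
  refine (mem_dOrbit.1 hb).preserves hf hg (P := fun y => f (g (f y)) = g (f (g y)))
    (fun y hy => ?_) (fun y hy => ?_) ha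
  · simpa [hf _, hg _] using (congrArg g hy).symm
  · simpa [hf _, hg _] using (congrArg f hy).symm

open scoped Classical in
noncomputable def dOrbits (f g : Y → Y) : Finset (Finset Y) := univ.image (dOrbit f g)

theorem sum_dOrbits_sum {M : Type*} [AddCommMonoid M] (φ : Y → M) :
    ∑ O ∈ dOrbits f g, ∑ y ∈ O, φ y = ∑ y, φ y := by
  classical
  refine sum_image' φ fun a _ => ?_
  simp only [dOrbit_eq_iff_mem, filter_mem_eq_inter, univ_inter]

variable [DecidableEq Y]

theorem sum_dWeight_dOrbit_of_fixed (hf : Involutive f) (hg : Involutive g) {a : Y}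
    (hfa : f a = a) (hga : g a = a) : ∑ y ∈ dOrbit f g a, dWeight f g y = 12 := by
  simp [dOrbit_eq_singleton hf hg hfa hga, dWeight, hfa, hga]

theorem triple_subset_dOrbit (a : Y) : {a, g a, f (g a)} ⊆ dOrbit f g a := by
  have ha := mem_dOrbit_self (f := f) (g := g) a
  simp [insert_subset_iff, ha, apply_right_mem_dOrbit ha,
    apply_left_mem_dOrbit (apply_right_mem_dOrbit ha)]

theorem card_dOrbit_eq_three_iff_of_left_fixed (hf : Involutive f) (hg : Involutive g)
    (hfg : ∀ p, f p = p → f (g p) = g p → g p = p) {a : Y} (hfa : f a = a) (hga : g a ≠ a) :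
    #(dOrbit f g a) = 3 ↔ f (g (f a)) = g (f (g a)) := by
  have hT := triple_subset_dOrbit (f := f) (g := g) a
  have hTcard := card_triple_eq_three_of_left_fixed hf hfg hfa hga
  rw [hfa]
  constructor
  · intro hO
    have hgfga : g (f (g a)) ∈ dOrbit f g a := apply_right_mem_dOrbit (hT (by simp))
    rw [← eq_of_subset_of_card_le hT (by omega)] at hgfga
    simp only [mem_insert, mem_singleton] at hgfga
    rcases hgfga with h | h | h
    · exact absurd (hfg a hfa (hg.eq_iff.1 h)) hga
    · exact absurd (by rw [← hf (g a), hg.injective h, hfa]) hga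
    · exact h.symm
  · intro hbraid
    refine le_antisymm ?_ (hTcard ▸ card_le_card hT)
    refine (card_le_card (dOrbit_subset hf hg (S := {a, g a, f (g a)}) ?_ ?_ (by simp))).trans
      card_le_three
    · simp [hfa, hf _]
    · simp [hg _, ← hbraid]

theorem sum_dWeight_dOrbit_of_left_fixed (hf : Involutive f) (hg : Involutive g)
    (hfg : ∀ p, f p = p → f (g p) = g p → g p = p) {a : Y} (hfa : f a = a) (hga : g a ≠ a) :
    12 ≤ ∑ y ∈ dOrbit f g a, dWeight f g y ∧
      (∑ y ∈ dOrbit f g a, dWeight f g y = 12 ↔ f (g (f a)) = g (f (g a))) := by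
  have ha := mem_dOrbit_self (f := f) (g := g) a
  have h3 : 3 ≤ #(dOrbit f g a) := card_triple_eq_three_of_left_fixed hf hfg hfa hga ▸
    card_le_card (triple_subset_dOrbit a)
  have hboth : #{y ∈ dOrbit f g a | f y = y ∧ g y = y} = 0 :=
    card_eq_zero.2 <| filter_eq_empty_iff.2 fun y hy hfix =>
      hga (eq_of_mem_dOrbit_of_fixed hf hg hy hfix.1 hfix.2 ▸ hfix.2)
  have hpf : 1 ≤ #{y ∈ dOrbit f g a | f y = y} := card_pos.2 ⟨a, mem_filter.2 ⟨ha, hfa⟩⟩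
  have hpf_lt : #{y ∈ dOrbit f g a | f y = y} < #(dOrbit f g a) :=
    card_lt_card (filter_ssubset.2 ⟨g a, apply_right_mem_dOrbit ha, fun h => hga (hfg a hfa h)⟩)
  have hpg_lt : #{y ∈ dOrbit f g a | g y = y} < #(dOrbit f g a) :=
    card_lt_card (filter_ssubset.2 ⟨a, ha, hga⟩)
  -- by parity, the fixed point `a` of `f` forces a second fixed point of `f` or one of `g`
  have hparf := card_filter_apply_eq_self_modEq hf (s := dOrbit f g a)
    fun _ => apply_left_mem_dOrbit
  have hparg := card_filter_apply_eq_self_modEq hg (s := dOrbit f g a)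
    fun _ => apply_right_mem_dOrbit
  rw [sum_dWeight, ← card_dOrbit_eq_three_iff_of_left_fixed hf hg hfg hfa hga]
  unfold Nat.ModEq at hparf hparg
  omega

theorem quintuple_subset_dOrbit (a : Y) : {a, f a, g a, f (g a), g (f a)} ⊆ dOrbit f g a := by
  have ha := mem_dOrbit_self (f := f) (g := g) a
  simp [insert_subset_iff, ha, apply_right_mem_dOrbit ha, apply_left_mem_dOrbit ha,
    apply_left_mem_dOrbit (apply_right_mem_dOrbit ha),
    apply_right_mem_dOrbit (apply_left_mem_dOrbit ha)]

theorem card_quintuple_eq_five_of_free (hf : Involutive f) (hg : Involutive g)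
    (hfg : ∀ p, f p = g p → f p = p) (hfgf : ∀ p, f (g (f p)) = g p → f p = p) {a : Y}
    (hfree : ∀ y ∈ dOrbit f g a, f y ≠ y ∧ g y ≠ y) :
    #{a, f a, g a, f (g a), g (f a)} = 5 := by
  have ha := mem_dOrbit_self (f := f) (g := g) a
  have hfa_ne_ga : f a ≠ g a := fun h => (hfree a ha).1 (hfg a h)
  have hfga_ne_gfa : f (g a) ≠ g (f a) := fun h => (hfree a ha).1 (hfgf a (by rw [← h, hf]))
  have hf' : ∀ x, f (f x) = x := hf
  have hg' : ∀ x, g (g x) = x := hg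
  rw [card_insert_of_notMem, card_insert_of_notMem, card_insert_of_notMem, card_pair] <;>
    grind [apply_left_mem_dOrbit, apply_right_mem_dOrbit]

theorem card_dOrbit_eq_six_iff_of_free (hf : Involutive f) (hg : Involutive g)
    (hfg : ∀ p, f p = g p → f p = p) (hfgf : ∀ p, f (g (f p)) = g p → f p = p) {a : Y}
    (hfree : ∀ y ∈ dOrbit f g a, f y ≠ y ∧ g y ≠ y) :
    #(dOrbit f g a) = 6 ↔ f (g (f a)) = g (f (g a)) := by
  set S : Finset Y := {a, f a, g a, f (g a), g (f a)}
  have hS : S ⊆ dOrbit f g a := quintuple_subset_dOrbit a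
  have hScard : #S = 5 := card_quintuple_eq_five_of_free hf hg hfg hfgf hfree
  have hpar := card_filter_apply_eq_self_modEq hf (s := dOrbit f g a)
    fun _ => apply_left_mem_dOrbit
  rw [card_eq_zero.2 (filter_eq_empty_iff.2 fun y hy => (hfree y hy).1)] at hpar
  unfold Nat.ModEq at hpar
  constructor
  · -- `f (g (f a))` and `g (f (g a))` both lie in the one-element complement of `S`
    intro hO
    have ha := mem_dOrbit_self (f := f) (g := g) a
    have hf' : ∀ x, f (f x) = x := hf
    have hg' : ∀ x, g (g x) = x := hg
    have hfgfa := apply_left_mem_dOrbit (apply_right_mem_dOrbit (apply_left_mem_dOrbit ha))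
    have hgfga := apply_right_mem_dOrbit (apply_left_mem_dOrbit (apply_right_mem_dOrbit ha))
    refine card_le_one.1 (?_ : #(dOrbit f g a \ S) ≤ 1) _ (mem_sdiff.2 ⟨hfgfa, ?_⟩)
      _ (mem_sdiff.2 ⟨hgfga, ?_⟩)
    · rw [card_sdiff_of_subset hS]
      omega
    all_goals
      simp only [S, mem_insert, mem_singleton]
      grind [apply_left_mem_dOrbit, apply_right_mem_dOrbit]
  · intro hbraid
    have : dOrbit f g a ⊆ {a, f a, g a, f (g a), g (f a), f (g (f a))} := by
      refine dOrbit_subset hf hg ?_ ?_ (by simp)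
      · simp [hf _]
      · simp [hg _, hbraid]
    have hle := (card_le_card this).trans card_le_six
    have hge := hScard ▸ card_le_card hS
    omega

theorem sum_dWeight_dOrbit_of_free (hf : Involutive f) (hg : Involutive g)
    (hfg : ∀ p, f p = g p → f p = p) (hfgf : ∀ p, f (g (f p)) = g p → f p = p) {a : Y}
    (hfree : ∀ y ∈ dOrbit f g a, f y ≠ y ∧ g y ≠ y) :
    12 ≤ ∑ y ∈ dOrbit f g a, dWeight f g y ∧
      (∑ y ∈ dOrbit f g a, dWeight f g y = 12 ↔ f (g (f a)) = g (f (g a))) := by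
  have h5 : 5 ≤ #(dOrbit f g a) :=
    card_quintuple_eq_five_of_free hf hg hfg hfgf hfree ▸ card_le_card (quintuple_subset_dOrbit a)
  have hnone {p : Y → Prop} [DecidablePred p] (hp : ∀ y ∈ dOrbit f g a, ¬ p y) :
      #{y ∈ dOrbit f g a | p y} = 0 :=
    card_eq_zero.2 (filter_eq_empty_iff.2 hp)
  have hpar := card_filter_apply_eq_self_modEq hf (s := dOrbit f g a)
    fun _ => apply_left_mem_dOrbit
  rw [hnone fun y hy => (hfree y hy).1] at hpar
  rw [sum_dWeight, hnone fun y hy => (hfree y hy).1, hnone fun y hy => (hfree y hy).2,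
    hnone fun y hy h => (hfree y hy).1 h.1,
    ← card_dOrbit_eq_six_iff_of_free hf hg hfg hfgf hfree]
  unfold Nat.ModEq at hpar
  omega

theorem sum_dWeight_dOrbit (hf : Involutive f) (hg : Involutive g) (h : HasNoShortDOrbits f g)
    (a : Y) :
    12 ≤ ∑ y ∈ dOrbit f g a, dWeight f g y ∧
      (∑ y ∈ dOrbit f g a, dWeight f g y = 12 ↔ f (g (f a)) = g (f (g a))) := by
  by_cases hfix : ∃ d ∈ dOrbit f g a, f d = d ∨ g d = d
  · obtain ⟨d, hd, hd_fix⟩ := hfix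
    have had : a ∈ dOrbit f g d := dOrbit_eq_iff_mem.2 hd ▸ mem_dOrbit_self a
    have hbraid : f (g (f a)) = g (f (g a)) ↔ f (g (f d)) = g (f (g d)) :=
      ⟨fun h => braid_of_mem_dOrbit hf hg h hd, fun h => braid_of_mem_dOrbit hf hg h had⟩
    rw [← dOrbit_eq_iff_mem.2 hd, hbraid]
    by_cases hboth : f d = d ∧ g d = d
    · rw [sum_dWeight_dOrbit_of_fixed hf hg hboth.1 hboth.2]
      simp [hboth.1, hboth.2]
    rcases hd_fix with hfd | hgd
    · exact sum_dWeight_dOrbit_of_left_fixed hf hg h.right_fixed_of_left_fixed hfd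
        fun hgd => hboth ⟨hfd, hgd⟩
    · rw [dOrbit_comm, dWeight_comm, eq_comm (a := f (g (f d)))]
      exact sum_dWeight_dOrbit_of_left_fixed hg hf h.left_fixed_of_right_fixed hgd
        fun hfd => hboth ⟨hfd, hgd⟩
  · push Not at hfix
    exact sum_dWeight_dOrbit_of_free hf hg h.fixed_of_apply_eq_apply
      h.fixed_of_fgf_eq hfix

end DOrbits

theorem Finset.card_le_and_card_eq_iff_of_sum_eq {ι : Type*} {s : Finset ι} {w : ι → ℕ}
    {c N : ℕ} (hc : 0 < c) (hw : ∀ i ∈ s, c ≤ w i) (hsum : ∑ i ∈ s, w i = c * N) :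
    #s ≤ N ∧ (#s = N ↔ ∀ i ∈ s, w i = c) := by
  have hconst : ∑ _i ∈ s, c = c * #s := by rw [sum_const, smul_eq_mul, mul_comm]
  refine ⟨Nat.le_of_mul_le_mul_left (hconst ▸ hsum ▸ sum_le_sum hw) hc, ?_⟩
  have : (∀ i ∈ s, w i = c) ↔ ∑ _i ∈ s, c = ∑ i ∈ s, w i := by
    rw [sum_eq_sum_iff_of_le hw]
    exact forall₂_congr fun _ _ => eq_comm
  rw [this, hconst, hsum, Nat.mul_right_inj hc.ne']

section QuantumBinomial

variable {X : Type*} {r : X × X → X × X}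

theorem r12_involutive (hr : Involutive r) : Involutive (r12 r) := by
  rintro ⟨x, y, z⟩
  simp [r12, hr _]

theorem r23_involutive (hr : Involutive r) : Involutive (r23 r) := by
  rintro ⟨x, y, z⟩
  simp [r23, hr _]

theorem fst_apply_eq_self_iff (hl : ∀ x, Injective fun y => (r (x, y)).1)
    (hsq : ∀ x, r (x, x) = (x, x)) {x y : X} : (r (x, y)).1 = x ↔ y = x := by
  simpa [hsq] using (hl x).eq_iff (a := y) (b := x)

theorem snd_apply_eq_self_iff (hr : ∀ x, Injective fun y => (r (y, x)).2)
    (hsq : ∀ x, r (x, x) = (x, x)) {x y : X} : (r (y, x)).2 = x ↔ y = x := by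
  simpa [hsq] using (hr x).eq_iff (a := y) (b := x)

theorem r12_apply_eq_self_iff (hl : ∀ x, Injective fun y => (r (x, y)).1)
    (hsq : ∀ x, r (x, x) = (x, x)) {p : X × X × X} : r12 r p = p ↔ p.1 = p.2.1 := by
  obtain ⟨x, y, z⟩ := p
  change _ ↔ x = y
  refine ⟨fun h => ((fst_apply_eq_self_iff hl hsq).1 (congrArg Prod.fst h :)).symm, ?_⟩
  rintro rfl
  simp [r12, hsq]

theorem r23_apply_eq_self_iff (hl : ∀ x, Injective fun y => (r (x, y)).1)
    (hsq : ∀ x, r (x, x) = (x, x)) {p : X × X × X} : r23 r p = p ↔ p.2.1 = p.2.2 := by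
  obtain ⟨x, y, z⟩ := p
  change _ ↔ y = z
  refine ⟨fun h => ((fst_apply_eq_self_iff hl hsq).1 (congrArg (·.2.1) h :)).symm, ?_⟩
  rintro rfl
  simp [r23, hsq]

theorem hasNoShortDOrbits_r12_r23 (hl : ∀ x, Injective fun y => (r (x, y)).1)
    (hr : ∀ x, Injective fun y => (r (y, x)).2) (hsq : ∀ x, r (x, x) = (x, x)) :
    HasNoShortDOrbits (r12 r) (r23 r) where
  fixed_of_apply_eq_apply := fun ⟨x, y, z⟩ h => by
    rw [r12_apply_eq_self_iff hl hsq]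
    exact ((fst_apply_eq_self_iff hl hsq).1 (congrArg Prod.fst h :)).symm
  fixed_of_fgf_eq := fun ⟨x, y, z⟩ h => by
    have h₃ : (r ((r (x, y)).2, z)).2 = (r (y, z)).2 := congrArg (·.2.2) h
    rw [r12_apply_eq_self_iff hl hsq]
    exact (snd_apply_eq_self_iff hr hsq).1 (hr z h₃)
  right_fixed_of_left_fixed := fun ⟨x, y, z⟩ h₁ h₂ => by
    rw [r12_apply_eq_self_iff hl hsq] at h₁ h₂
    dsimp only at h₁
    subst h₁
    rw [r23_apply_eq_self_iff hl hsq]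
    exact ((fst_apply_eq_self_iff hl hsq).1 h₂.symm).symm
  left_fixed_of_right_fixed := fun ⟨x, y, z⟩ h₁ h₂ => by
    rw [r23_apply_eq_self_iff hl hsq] at h₁ h₂
    dsimp only at h₁
    subst h₁
    rw [r12_apply_eq_self_iff hl hsq]
    exact (snd_apply_eq_self_iff hr hsq).1 h₂

theorem sum_dWeight_r12_r23 [Fintype X] [DecidableEq X]
    (hl : ∀ x, Injective fun y => (r (x, y)).1) (hsq : ∀ x, r (x, x) = (x, x)) :
    ∑ p, dWeight (r12 r) (r23 r) p = 12 * (Fintype.card X + 2).choose 3 := by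
  have hweight (x y z : X) : dWeight (r12 r) (r23 r) (x, y, z) =
      2 + (if x = y then 3 else 0) + (if y = z then 3 else 0) +
        if x = y ∧ y = z then 4 else 0 := by
    simp only [dWeight, r12_apply_eq_self_iff hl hsq, r23_apply_eq_self_iff hl hsq]
  have hchoose : 12 * (Fintype.card X + 2).choose 3 =
      2 * Fintype.card X ^ 3 + 6 * Fintype.card X ^ 2 + 4 * Fintype.card X := by
    have h := Nat.descFactorial_eq_factorial_mul_choose (Fintype.card X + 2) 3
    simp only [Nat.descFactorial, add_tsub_cancel_right, Nat.add_one_sub_one, tsub_zero, mul_one,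
      Nat.factorial, Nat.succ_eq_add_one, Nat.reduceAdd, zero_add, Nat.reduceMul] at h
    linarith
  rw [hchoose, Fintype.sum_prod_type]
  simp_rw [Fintype.sum_prod_type, hweight]
  simp only [ite_and, sum_add_distrib, sum_const, card_univ, smul_eq_mul, sum_ite_eq, mem_univ,
    ↓reduceIte, sum_ite_irrel, mul_zero, ← mul_sum]
  ring

theorem ncard_setOf_isDOrbit [Fintype X] :
    {O : Set (X × X × X) | IsDOrbit r O}.ncard = #(dOrbits (r12 r) (r23 r)) := by
  have : {O : Set (X × X × X) | IsDOrbit r O} =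
      (fun O => ↑O) '' (dOrbits (r12 r) (r23 r) : Set (Finset (X × X × X))) := by
    ext O
    simp only [IsDOrbit, dOrbits, coe_image, coe_univ, Set.image_univ, ← Set.range_comp,
      Set.mem_range, comp_apply, coe_dOrbit]
    exact exists_congr fun _ => eq_comm
  rw [this, Set.ncard_image_of_injective _ coe_injective, Set.ncard_coe_finset]

end QuantumBinomial

/-- For a finite quantum binomial set with |X| = n, the total number of
D-orbits in X³ is at most C(n+2,3), with equality iff (X,r) is a symmetric
set (r satisfies the braid relation). -/
theorem card_orbits_le_and_eq_iff_symmetric {X : Type*} [Fintype X]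
    (r : X × X → X × X) (hqb : IsQuantumBinomial r) :
    {O : Set (X × X × X) | IsDOrbit r O}.ncard ≤ (Fintype.card X + 2).choose 3 ∧
    ({O : Set (X × X × X) | IsDOrbit r O}.ncard = (Fintype.card X + 2).choose 3 ↔
      IsBraided r) := by
  classical
  obtain ⟨hinv, hl, hr, hsq⟩ := hqb
  have hf := r12_involutive hinv
  have hg := r23_involutive hinv
  have horbit := sum_dWeight_dOrbit hf hg
    (hasNoShortDOrbits_r12_r23 (fun x => (hl x).injective) (fun x => (hr x).injective) hsq)
  have htotal : ∑ O ∈ dOrbits (r12 r) (r23 r), ∑ p ∈ O, dWeight (r12 r) (r23 r) p =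
      12 * (Fintype.card X + 2).choose 3 :=
    (sum_dOrbits_sum _).trans (sum_dWeight_r12_r23 (fun x => (hl x).injective) hsq)
  have hbraided : IsBraided r ↔
      ∀ O ∈ dOrbits (r12 r) (r23 r), ∑ p ∈ O, dWeight (r12 r) (r23 r) p = 12 := by
    simp only [dOrbits, forall_mem_image, mem_univ, true_implies, horbit, IsBraided, funext_iff,
      comp_apply]
  rw [ncard_setOf_isDOrbit, hbraided]
  refine card_le_and_card_eq_iff_of_sum_eq (by norm_num) ?_ htotal
  simp only [dOrbits, forall_mem_image, mem_univ, true_implies]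
  exact fun a => (horbit a).1
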